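/- In the rank-2 Hermitian setting, for P = a₁H_{ε₁} + a₂H_{ε₂} ∈ a, one has [J(P), μ(P)] = -2‖H_{ε₁}‖⁴(a₁³H_{ε₁} + a₂³H_{ε₂}), and hence ‖[J(P), μ(P)]‖² = 4(a₁⁶ + a₂⁶)‖H_{ε₁}‖¹⁰. -/

import Mathlib

/-! Since `(ad Z₁)² H₁ = -H₁` gives `⁅⁅Z₁, H₁⁆, Z₁⁆ = H₁` and the cross brackets vanish, bracketing
`J(P) = a₁⁅Z₁, H₁⁆ + a₂⁅Z₂, H₂⁆` with `a₁²Z₁ + a₂²Z₂` leaves exactly `a₁³H₁ + a₂³H₂`. The norm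
then follows because `H₁, H₂` are Killing-orthogonal of equal length. -/

section LieBracket

variable {R L : Type*} [CommRing R] [LieRing L] [LieAlgebra R L]

lemma lie_lie_left_eq_of_lie_lie_eq_neg {Z H : L} (h : ⁅Z, ⁅Z, H⁆⁆ = -H) : ⁅⁅Z, H⁆, Z⁆ = H := by
  rw [← lie_skew, h, neg_neg]

lemma lie_add_smul_lie_add_smul {H1 H2 Z1 Z2 : L}
    (had1 : ⁅Z1, ⁅Z1, H1⁆⁆ = -H1) (had2 : ⁅Z2, ⁅Z2, H2⁆⁆ = -H2)
    (hcross1 : ⁅⁅Z1, H1⁆, Z2⁆ = 0) (hcross2 : ⁅⁅Z2, H2⁆, Z1⁆ = 0) (a1 a2 b1 b2 : R) :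
    ⁅a1 • ⁅Z1, H1⁆ + a2 • ⁅Z2, H2⁆, b1 • Z1 + b2 • Z2⁆ = (a1 * b1) • H1 + (a2 * b2) • H2 := by
  simp only [lie_add, add_lie, lie_smul, smul_lie, smul_smul,
    lie_lie_left_eq_of_lie_lie_eq_neg had1, lie_lie_left_eq_of_lie_lie_eq_neg had2,
    hcross1, hcross2, smul_zero, add_zero, zero_add]
  rw [mul_comm b1, mul_comm b2]

end LieBracket

lemma LinearMap.BilinForm.apply_add_smul_of_orthogonal {R M : Type*} [CommRing R]
    [AddCommGroup M] [Module R M] {B : LinearMap.BilinForm R M} (hB : B.IsRefl) {x y : M}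
    (hxy : B x y = 0) (s t : R) :
    B (s • x + t • y) (s • x + t • y) = s ^ 2 * B x x + t ^ 2 * B y y := by
  simp only [map_add, map_smul, LinearMap.add_apply, LinearMap.smul_apply, smul_eq_mul,
    hxy, hB x y hxy]
  ring

/-- In the rank-two Hermitian setting, for `P = a₁H_{ε₁} + a₂H_{ε₂} ∈ a` one has
`[J(P), μ(P)] = -2‖H_{ε₁}‖⁴(a₁³H_{ε₁} + a₂³H_{ε₂})` and hence
`‖[J(P), μ(P)]‖² = 4(a₁⁶ + a₂⁶)‖H_{ε₁}‖¹⁰`, with respect to `⟨X,Y⟩ = -B(X,Y)`. -/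
theorem lie_JP_muP_formula
    {g : Type*} [LieRing g] [LieAlgebra ℝ g] [Module.Finite ℝ g]
    (H1 H2 Z1 Z2 : g) (c a1 a2 : ℝ)
    (hc1 : -(killingForm ℝ g H1 H1) = c)
    (hc2 : -(killingForm ℝ g H2 H2) = c)
    (horth : killingForm ℝ g H1 H2 = 0)
    (had1 : ⁅Z1, ⁅Z1, H1⁆⁆ = -H1)
    (had2 : ⁅Z2, ⁅Z2, H2⁆⁆ = -H2)
    (hcross1 : ⁅⁅Z1, H1⁆, Z2⁆ = 0)
    (hcross2 : ⁅⁅Z2, H2⁆, Z1⁆ = 0)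
    (JP μP : g)
    (hJP : JP = a1 • ⁅Z1, H1⁆ + a2 • ⁅Z2, H2⁆)
    (hμP : μP = (-2 * c ^ 2) • (a1 ^ 2 • Z1 + a2 ^ 2 • Z2)) :
    ⁅JP, μP⁆ = (-2 * c ^ 2) • (a1 ^ 3 • H1 + a2 ^ 3 • H2) ∧
    -(killingForm ℝ g ⁅JP, μP⁆ ⁅JP, μP⁆) = 4 * (a1 ^ 6 + a2 ^ 6) * c ^ 5 := by
  have hbracket : ⁅JP, μP⁆ = (-2 * c ^ 2) • (a1 ^ 3 • H1 + a2 ^ 3 • H2) := by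
    rw [hJP, hμP, lie_smul, lie_add_smul_lie_add_smul had1 had2 hcross1 hcross2, ← pow_succ',
      ← pow_succ']
  refine ⟨hbracket, ?_⟩
  rw [hbracket, smul_add, smul_smul, smul_smul,
    LinearMap.BilinForm.apply_add_smul_of_orthogonal (B := killingForm ℝ g)
      (LieModule.traceForm_isSymm ℝ g g).isRefl horth,
    neg_eq_iff_eq_neg.mp hc1, neg_eq_iff_eq_neg.mp hc2]
  ring
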